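/- arXiv:1411.1357 — 10 statements merged into one kernel-verified Lean document; each statement's English description precedes it below -/
import Mathlib

section
/- Let f : ℂⁿ → ℝ (n ≥ 2) be a generalized frame function (f(0)=0 and f(u+v)=f(u)+f(v) for all nonzero orthogonal u,v). If u, v are orthogonal nonzero vectors of the same norm, then f(u) = 2·f(u/2) + f(v/2) + f(-v/2). -/
open scoped InnerProductSpace

/-- The basic identity for generalized frame functions (Lemma A.3). -/
theorem generalized_frame_function_basic_identity
    (n : ℕ) (hn : 2 ≤ n) (f : EuclideanSpace ℂ (Fin n) → ℝ)
    (hf0 : f 0 = 0)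
    (hframe : ∀ u v : EuclideanSpace ℂ (Fin n), u ≠ 0 → v ≠ 0 → ⟪u, v⟫_ℂ = 0 →
      f (u + v) = f u + f v)
    (u v : EuclideanSpace ℂ (Fin n)) (hu : u ≠ 0) (hv : v ≠ 0)
    (horth : ⟪u, v⟫_ℂ = 0) (hnorm : ‖u‖ = ‖v‖) :
    f u = 2 * f ((2 : ℂ)⁻¹ • u) + f ((2 : ℂ)⁻¹ • v) + f (-((2 : ℂ)⁻¹ • v)) := by
  set a : EuclideanSpace ℂ (Fin n) := (2 : ℂ)⁻¹ • u with ha_def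
  set b : EuclideanSpace ℂ (Fin n) := (2 : ℂ)⁻¹ • v with hb_def
  have ha : a ≠ 0 := smul_ne_zero (by norm_num) hu
  have hb : b ≠ 0 := smul_ne_zero (by norm_num) hv
  have hab : ⟪a, b⟫_ℂ = 0 := by
    rw [ha_def, hb_def, inner_smul_left, inner_smul_right, horth]
    simp
  have hnab : ‖a‖ = ‖b‖ := by
    rw [ha_def, hb_def, norm_smul, norm_smul, hnorm]
  have haa : ⟪a, a⟫_ℂ = ⟪b, b⟫_ℂ := by
    rw [inner_self_eq_norm_sq_to_K, inner_self_eq_norm_sq_to_K, hnab]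
  have horth2 : ⟪a + b, a - b⟫_ℂ = 0 := by
    rw [inner_sub_right, inner_add_left, inner_add_left, haa, hab]
    have : ⟪b, a⟫_ℂ = 0 := by
      rw [← inner_conj_symm, hab, map_zero]
    rw [this]
    ring
  have hbb : ⟪b, b⟫_ℂ ≠ 0 := inner_self_ne_zero.mpr hb
  have h1 : a + b ≠ 0 := by
    intro h
    have : a = -b := by linear_combination (norm := abel) h
    rw [this] at hab
    rw [inner_neg_left] at hab
    exact hbb (neg_eq_zero.mp hab)
  have h2 : a - b ≠ 0 := by
    intro h
    have : a = b := sub_eq_zero.mp h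
    rw [this] at hab
    exact hbb hab
  have hsum : (a + b) + (a - b) = u := by
    have : a + a = u := by
      rw [ha_def, ← add_smul]
      norm_num
    linear_combination (norm := abel) this
  have hambf : a - b = a + (-b) := by abel
  have hnb : (-b) ≠ 0 := neg_ne_zero.mpr hb
  have hanb : ⟪a, -b⟫_ℂ = 0 := by rw [inner_neg_right, hab, neg_zero]
  have e1 : f u = f (a + b) + f (a - b) := by
    rw [← hsum]; exact hframe _ _ h1 h2 horth2
  have e2 : f (a + b) = f a + f b := hframe _ _ ha hb hab
  have e3 : f (a - b) = f a + f (-b) := by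
    rw [hambf]; exact hframe _ _ ha hnb hanb
  rw [e1, e2, e3]; ring
end

section
/- Let n ≥ 2 and let f : ℂⁿ → ℝ be a generalized frame function which is odd (f(-v) = -f(v) for all v) and sublinear (f(v)/‖v‖ → 0 as ‖v‖ → ∞). Then f ≡ 0. -/
/-!
Given `v ≠ 0`, pick `w ⟂ v` with `‖w‖ = ‖v‖` (possible in dimension at least two). Then
`v + w ⟂ v - w`, so frame additivity and oddness give
`f (2v) = f (v + w) + f (v - w) = (f v + f w) + (f v - f w) = 2 f v`.
Hence `f v / ‖v‖` is constant along `2 ^ k • v`, whose norm tends to infinity, and sublinearity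
forces it to vanish.
-/

open scoped InnerProductSpace

/-- A function `f : ℂⁿ → ℝ` is sublinear if `f(v)/‖v‖ → 0` as `‖v‖ → ∞`. -/
def SublinearCn {n : ℕ} (f : EuclideanSpace ℂ (Fin n) → ℝ) : Prop :=
  Filter.Tendsto (fun v => f v / ‖v‖)
    (Filter.comap (fun v : EuclideanSpace ℂ (Fin n) => ‖v‖) Filter.atTop) (nhds 0)

open Filter Module

variable {𝕜 E : Type*} [RCLike 𝕜] [NormedAddCommGroup E] [InnerProductSpace 𝕜 E]

theorem exists_inner_eq_zero_norm_eq (h : 2 ≤ finrank 𝕜 E) (v : E) :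
    ∃ w : E, ⟪v, w⟫_𝕜 = 0 ∧ ‖w‖ = ‖v‖ := by
  have : FiniteDimensional 𝕜 E := Module.finite_of_finrank_pos (by omega)
  obtain ⟨u, hu, hu0⟩ := Submodule.exists_mem_ne_zero_of_ne_bot (p := (𝕜 ∙ v)ᗮ) <| by
    intro hbot
    have := (𝕜 ∙ v).finrank_add_finrank_orthogonal
    rw [hbot, finrank_bot, add_zero] at this
    have : finrank 𝕜 (𝕜 ∙ v) ≤ 1 := (finrank_span_le_card ({v} : Set E)).trans (by simp)
    omega
  refine ⟨((‖v‖ / ‖u‖ : ℝ) : 𝕜) • u, ?_, ?_⟩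
  · rw [inner_smul_right, Submodule.mem_orthogonal_singleton_iff_inner_right.mp hu, mul_zero]
  · rw [norm_smul, RCLike.norm_ofReal, abs_of_nonneg (by positivity),
      div_mul_cancel₀ _ (norm_ne_zero_iff.mpr hu0)]

variable (𝕜) in
def IsGeneralizedFrameFunction {G : Type*} [AddCommGroup G] (f : E → G) : Prop :=
  f 0 = 0 ∧ ∀ u v : E, u ≠ 0 → v ≠ 0 → ⟪u, v⟫_𝕜 = 0 → f (u + v) = f u + f v

theorem IsGeneralizedFrameFunction.map_add_self {G : Type*} [AddCommGroup G] {f : E → G}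
    (hf : IsGeneralizedFrameFunction 𝕜 f) (hodd : ∀ v, f (-v) = -f v)
    (h : 2 ≤ finrank 𝕜 E) (v : E) : f (v + v) = f v + f v := by
  obtain ⟨hf0, hadd⟩ := hf
  rcases eq_or_ne v 0 with rfl | hv
  · simp [hf0]
  obtain ⟨w, hvw, hnorm⟩ := exists_inner_eq_zero_norm_eq h v
  have hw : w ≠ 0 := norm_ne_zero_iff.mp (hnorm ▸ norm_ne_zero_iff.mpr hv)
  have hvv : ⟪v, v⟫_𝕜 ≠ 0 := inner_self_ne_zero.mpr hv
  have hsum : v + w ≠ 0 := fun h' => by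
    rw [eq_neg_of_add_eq_zero_right h', inner_neg_right, neg_eq_zero] at hvw
    exact hvv hvw
  have hdiff : v - w ≠ 0 := fun h' => by
    rw [← sub_eq_zero.mp h'] at hvw
    exact hvv hvw
  have horth : ⟪v + w, v - w⟫_𝕜 = 0 := by
    rw [inner_add_left, inner_sub_right, inner_sub_right, inner_eq_zero_symm.mp hvw, hvw,
      inner_self_eq_norm_sq_to_K, inner_self_eq_norm_sq_to_K, hnorm]
    ring
  calc f (v + v) = f ((v + w) + (v - w)) := by rw [add_add_sub_cancel]
    _ = f v + f w + (f v + f (-w)) := by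
      rw [hadd _ _ hsum hdiff horth, hadd _ _ hv hw hvw, sub_eq_add_neg,
        hadd _ _ hv (neg_ne_zero.mpr hw) (by rw [inner_neg_right, hvw, neg_zero])]
    _ = f v + f v := by rw [hodd]; abel

theorem map_two_pow_smul {F : Type*} [AddCommGroup F] [Module ℝ F] {f : F → ℝ}
    (hf : ∀ v, f (v + v) = f v + f v) (v : F) (k : ℕ) :
    f ((2 : ℝ) ^ k • v) = 2 ^ k * f v := by
  induction k with
  | zero => simp
  | succ k ih =>
    rw [pow_succ, mul_two, add_smul, hf, ih]
    ring

theorem eq_zero_of_map_add_self_of_tendsto {F : Type*} [NormedAddCommGroup F] [NormedSpace ℝ F]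
    {f : F → ℝ} (hf : ∀ v, f (v + v) = f v + f v)
    (hsub : Tendsto (fun v => f v / ‖v‖) (comap (‖·‖) atTop) (nhds 0)) (v : F) : f v = 0 := by
  rcases eq_or_ne v 0 with rfl | hv
  · simpa using hf 0
  have hnorm : ∀ k : ℕ, ‖(2 : ℝ) ^ k • v‖ = 2 ^ k * ‖v‖ := fun k => by
    rw [norm_smul, norm_pow, Real.norm_two]
  have htends : Tendsto (fun k : ℕ => (2 : ℝ) ^ k • v) atTop (comap (‖·‖) atTop) := by
    refine tendsto_comap_iff.mpr ?_
    simp only [Function.comp_def, hnorm]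
    exact (tendsto_pow_atTop_atTop_of_one_lt one_lt_two).atTop_mul_const (norm_pos_iff.mpr hv)
  have hconst : (fun k : ℕ => f ((2 : ℝ) ^ k • v) / ‖(2 : ℝ) ^ k • v‖) = fun _ => f v / ‖v‖ := by
    funext k
    rw [map_two_pow_smul hf, hnorm, mul_div_mul_left _ _ (by positivity)]
  have hlim := hsub.comp htends
  rw [Function.comp_def, hconst] at hlim
  have := tendsto_nhds_unique tendsto_const_nhds hlim
  rwa [div_eq_zero_iff, norm_eq_zero, or_iff_left hv] at this

/-- Every odd sublinear generalized frame function on ℂⁿ, n ≥ 2, is trivial. -/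
theorem odd_sublinear_generalized_frame_function_trivial
    (n : ℕ) (hn : 2 ≤ n) (f : EuclideanSpace ℂ (Fin n) → ℝ)
    (hf0 : f 0 = 0)
    (hframe : ∀ u v : EuclideanSpace ℂ (Fin n), u ≠ 0 → v ≠ 0 → ⟪u, v⟫_ℂ = 0 →
      f (u + v) = f u + f v)
    (hodd : ∀ v, f (-v) = -f v)
    (hsub : SublinearCn f) :
    ∀ v, f v = 0 := by
  have hf : IsGeneralizedFrameFunction ℂ f := ⟨hf0, hframe⟩
  have hdim : 2 ≤ finrank ℂ (EuclideanSpace ℂ (Fin n)) := by rwa [finrank_euclideanSpace_fin]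
  exact eq_zero_of_map_add_self_of_tendsto (hf.map_add_self hodd hdim) hsub
end

section
/- Let n ≥ 2 and let f : ℂⁿ → ℝ be a sublinear generalized frame function. Then f is even, i.e. f(-v) = f(v) for all v ∈ ℂⁿ. -/
open scoped InnerProductSpace

lemma exists_orth_same_norm (n : ℕ) (hn : 2 ≤ n) (v : EuclideanSpace ℂ (Fin n)) (hv : v ≠ 0) :
    ∃ w : EuclideanSpace ℂ (Fin n), w ≠ 0 ∧ ⟪v, w⟫_ℂ = 0 ∧ ‖w‖ = ‖v‖ := by
  have hK : (ℂ ∙ v)ᗮ ≠ ⊥ := by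
    intro hbot
    have h1 : Module.finrank ℂ (ℂ ∙ v) + Module.finrank ℂ ((ℂ ∙ v)ᗮ : Submodule ℂ (EuclideanSpace ℂ (Fin n))) = Module.finrank ℂ (EuclideanSpace ℂ (Fin n)) :=
      Submodule.finrank_add_finrank_orthogonal _
    rw [hbot, finrank_span_singleton hv] at h1
    simp [finrank_euclideanSpace] at h1
    omega
  obtain ⟨w₀, hw₀mem, hw₀⟩ := Submodule.exists_mem_ne_zero_of_ne_bot hK
  have hinner : ⟪v, w₀⟫_ℂ = 0 := hw₀mem v (Submodule.mem_span_singleton_self v)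
  refine ⟨((‖v‖ / ‖w₀‖ : ℝ) : ℂ) • w₀, ?_, ?_, ?_⟩
  · simp only [ne_eq, smul_eq_zero, not_or]
    exact ⟨by simp [div_eq_zero_iff, hv, hw₀], hw₀⟩
  · rw [inner_smul_right, hinner, mul_zero]
  · rw [norm_smul]
    simp [abs_div, abs_of_nonneg (norm_nonneg _), div_mul_cancel₀, norm_ne_zero_iff.mpr hw₀]

/-- Every sublinear generalized frame function on ℂⁿ, n ≥ 2, is even. -/
theorem sublinear_generalized_frame_function_even
    (n : ℕ) (hn : 2 ≤ n) (f : EuclideanSpace ℂ (Fin n) → ℝ)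
    (hf0 : f 0 = 0)
    (hframe : ∀ u v : EuclideanSpace ℂ (Fin n), u ≠ 0 → v ≠ 0 → ⟪u, v⟫_ℂ = 0 →
      f (u + v) = f u + f v)
    (hsub : SublinearCn f) :
    ∀ v, f (-v) = f v := by
  -- doubling lemma
  have hdouble : ∀ v : EuclideanSpace ℂ (Fin n), v ≠ 0 →
      f ((2:ℂ) • v) - f (-((2:ℂ) • v)) = 2 * (f v - f (-v)) := by
    intro v hv
    obtain ⟨w, hw, hvw, hnorm⟩ := exists_orth_same_norm n hn v hv
    have hwv : ⟪w, v⟫_ℂ = 0 := by rw [← inner_conj_symm, hvw, map_zero]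
    have hnw : (-w : EuclideanSpace ℂ (Fin n)) ≠ 0 := neg_ne_zero.mpr hw
    have hnv : (-v : EuclideanSpace ℂ (Fin n)) ≠ 0 := neg_ne_zero.mpr hv
    have hvv : ⟪v, v⟫_ℂ = (‖v‖:ℂ)^2 := by
      rw [inner_self_eq_norm_sq_to_K]; norm_num
    have hww : ⟪w, w⟫_ℂ = (‖v‖:ℂ)^2 := by
      rw [inner_self_eq_norm_sq_to_K, hnorm]; norm_num
    have hab : ⟪v + w, v - w⟫_ℂ = 0 := by
      rw [inner_sub_right, inner_add_left, inner_add_left, hvw, hwv, hvv, hww]; ring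
    have hab' : ⟪-v + w, -v - w⟫_ℂ = 0 := by
      rw [inner_sub_right, inner_add_left, inner_add_left, inner_neg_neg,
        inner_neg_left, inner_neg_right, hvw, hwv, hvv, hww]; ring
    have ha : v + w ≠ 0 := by
      intro h
      have : w = -v := by linear_combination (norm := module) h
      rw [this, inner_neg_right, hvv] at hvw
      simp [hv] at hvw
    have hb : v - w ≠ 0 := by
      intro h
      have : w = v := by linear_combination (norm := module) -h
      rw [this, hvv] at hvw
      simp [hv] at hvw
    have ha' : -v + w ≠ 0 := by
      intro h
      have : w = v := by linear_combination (norm := module) h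
      rw [this, hvv] at hvw
      simp [hv] at hvw
    have hb' : -v - w ≠ 0 := by
      intro h
      have : w = -v := by linear_combination (norm := module) -h
      rw [this, inner_neg_right, hvv] at hvw
      simp [hv] at hvw
    have e1 : f ((2:ℂ) • v) = f (v + w) + f (v - w) := by
      have : (v + w) + (v - w) = (2:ℂ) • v := by module
      rw [← this]; exact hframe _ _ ha hb hab
    have e2 : f (-((2:ℂ) • v)) = f (-v + w) + f (-v - w) := by
      have : (-v + w) + (-v - w) = -((2:ℂ) • v) := by module
      rw [← this]; exact hframe _ _ ha' hb' hab'
    have e3 : f (v + w) = f v + f w := hframe v w hv hw hvw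
    have e4 : f (v - w) = f v + f (-w) := by
      rw [sub_eq_add_neg]
      exact hframe v (-w) hv hnw (by rw [inner_neg_right, hvw, neg_zero])
    have e5 : f (-v + w) = f (-v) + f w :=
      hframe (-v) w hnv hw (by rw [inner_neg_left, hvw, neg_zero])
    have e6 : f (-v - w) = f (-v) + f (-w) := by
      rw [sub_eq_add_neg]
      exact hframe (-v) (-w) hnv hnw (by rw [inner_neg_left, inner_neg_right, hvw]; ring)
    rw [e1, e2, e3, e4, e5, e6]; ring
  intro v
  rcases eq_or_ne v 0 with rfl | hv
  · simp
  -- iterate doubling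
  have hiter : ∀ k : ℕ, f ((2:ℂ)^k • v) - f (-((2:ℂ)^k • v)) = 2^k * (f v - f (-v)) := by
    intro k
    induction k with
    | zero => simp
    | succ k ih =>
      have hne : (2:ℂ)^k • v ≠ 0 := smul_ne_zero (pow_ne_zero _ two_ne_zero) hv
      have h2 : (2:ℂ)^(k+1) • v = (2:ℂ) • ((2:ℂ)^k • v) := by
        rw [smul_smul]; ring_nf
      rw [h2, hdouble _ hne, ih]; ring
  -- norms of iterates
  have hnorm : ∀ k : ℕ, ‖(2:ℂ)^k • v‖ = 2^k * ‖v‖ := by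
    intro k
    rw [norm_smul]
    norm_num
  have hnormpos : (0:ℝ) < ‖v‖ := norm_pos_iff.mpr hv
  -- the sequence tends to the comap filter
  have htend : Filter.Tendsto (fun k : ℕ => (2:ℂ)^k • v) Filter.atTop
      (Filter.comap (fun u : EuclideanSpace ℂ (Fin n) => ‖u‖) Filter.atTop) := by
    rw [Filter.tendsto_comap_iff]
    have : (fun u : EuclideanSpace ℂ (Fin n) => ‖u‖) ∘ (fun k : ℕ => (2:ℂ)^k • v)
        = fun k : ℕ => (2:ℝ)^k * ‖v‖ := by
      funext k; exact hnorm k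
    rw [this]
    exact (tendsto_pow_atTop_atTop_of_one_lt (by norm_num)).atTop_mul_const hnormpos
  have htend' : Filter.Tendsto (fun k : ℕ => -((2:ℂ)^k • v)) Filter.atTop
      (Filter.comap (fun u : EuclideanSpace ℂ (Fin n) => ‖u‖) Filter.atTop) := by
    rw [Filter.tendsto_comap_iff]
    have : (fun u : EuclideanSpace ℂ (Fin n) => ‖u‖) ∘ (fun k : ℕ => -((2:ℂ)^k • v))
        = fun k : ℕ => (2:ℝ)^k * ‖v‖ := by
      funext k; rw [Function.comp_apply, norm_neg]; exact hnorm k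
    rw [this]
    exact (tendsto_pow_atTop_atTop_of_one_lt (by norm_num)).atTop_mul_const hnormpos
  have t1 : Filter.Tendsto (fun k : ℕ => f ((2:ℂ)^k • v) / ‖(2:ℂ)^k • v‖) Filter.atTop (nhds 0) :=
    hsub.comp htend
  have t2 : Filter.Tendsto (fun k : ℕ => f (-((2:ℂ)^k • v)) / ‖(2:ℂ)^k • v‖) Filter.atTop (nhds 0) := by
    have := hsub.comp htend'
    simpa [Function.comp_def, norm_neg] using this
  have t3 : Filter.Tendsto (fun k : ℕ => (f ((2:ℂ)^k • v) - f (-((2:ℂ)^k • v))) / ‖(2:ℂ)^k • v‖)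
      Filter.atTop (nhds 0) := by
    have := t1.sub t2
    simpa [sub_div] using this
  -- constant sequence
  have hconst : ∀ k : ℕ, (f ((2:ℂ)^k • v) - f (-((2:ℂ)^k • v))) / ‖(2:ℂ)^k • v‖
      = (f v - f (-v)) / ‖v‖ := by
    intro k
    rw [hiter k, hnorm k]
    rw [mul_div_mul_left _ _ (by positivity : ((2:ℝ)^k) ≠ 0)]
  have : Filter.Tendsto (fun _ : ℕ => (f v - f (-v)) / ‖v‖) Filter.atTop (nhds 0) := by
    rw [show (fun _ : ℕ => (f v - f (-v)) / ‖v‖) = fun k => (f ((2:ℂ)^k • v) - f (-((2:ℂ)^k • v))) / ‖(2:ℂ)^k • v‖ from funext fun k => (hconst k).symm]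
    exact t3
  have h0 : (f v - f (-v)) / ‖v‖ = 0 := tendsto_nhds_unique tendsto_const_nhds this
  have := (div_eq_zero_iff.mp h0).resolve_right (ne_of_gt hnormpos)
  linarith
end

section
/- Let n ≥ 2 and let f : ℂⁿ → ℝ be a sublinear generalized frame function. Then f is weakly radial: f(u) = f(v) for all orthogonal u, v ∈ ℂⁿ with ‖u‖ = ‖v‖. -/
open scoped InnerProductSpace

/-- Every sublinear generalized frame function on ℂⁿ, n ≥ 2, is weakly radial. -/
theorem sublinear_generalized_frame_function_weakly_radial
    (n : ℕ) (hn : 2 ≤ n) (f : EuclideanSpace ℂ (Fin n) → ℝ)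
    (hf0 : f 0 = 0)
    (hframe : ∀ u v : EuclideanSpace ℂ (Fin n), u ≠ 0 → v ≠ 0 → ⟪u, v⟫_ℂ = 0 →
      f (u + v) = f u + f v)
    (hsub : SublinearCn f) :
    ∀ u v : EuclideanSpace ℂ (Fin n), ⟪u, v⟫_ℂ = 0 → ‖u‖ = ‖v‖ → f u = f v := by
  intro u v huv hnorm
  rcases eq_or_ne u 0 with hu | hu
  · subst hu
    have hv : v = 0 := by
      have : ‖v‖ = 0 := by simpa using hnorm.symm
      simpa using this
    rw [hv]
  rcases eq_or_ne v 0 with hv | hv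
  · exfalso
    apply hu
    have : ‖u‖ = 0 := by rw [hnorm, hv, norm_zero]
    simpa using this
  -- both nonzero
  have hvu : ⟪v, u⟫_ℂ = 0 := inner_eq_zero_symm.mp huv
  have hupv : u + v ≠ 0 := by
    intro h
    apply hu
    have h2 : ⟪u, u + v⟫_ℂ = 0 := by rw [h, inner_zero_right]
    rw [inner_add_right, huv, add_zero] at h2
    exact inner_self_eq_zero.mp h2
  have humv : u - v ≠ 0 := by
    intro h
    apply hu
    have h2 : ⟪u, u - v⟫_ℂ = 0 := by rw [h, inner_zero_right]
    rw [inner_sub_right, huv, sub_zero] at h2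
    exact inner_self_eq_zero.mp h2
  have horth : ⟪u + v, u - v⟫_ℂ = 0 := by
    have h1 : ⟪u + v, u - v⟫_ℂ = ⟪u, u⟫_ℂ - ⟪v, v⟫_ℂ := by
      rw [inner_sub_right, inner_add_left, inner_add_left, huv, hvu]
      ring
    rw [h1, inner_self_eq_norm_sq_to_K, inner_self_eq_norm_sq_to_K, hnorm, sub_self]
  have hadd : ∀ (a b : ℂ) (x y : EuclideanSpace ℂ (Fin n)), a ≠ 0 → b ≠ 0 →
      x ≠ 0 → y ≠ 0 → ⟪x, y⟫_ℂ = 0 → f (a • x + b • y) = f (a • x) + f (b • y) := by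
    intro a b x y ha hb hx hy hxy
    exact hframe _ _ (smul_ne_zero ha hx) (smul_ne_zero hb hy)
      (by rw [inner_smul_left, inner_smul_right, hxy, mul_zero, mul_zero])
  -- key doubling identity
  have keyD : ∀ a : ℂ, a ≠ 0 →
      f ((2 * a) • u) - f ((2 * a) • v)
        = (f (a • u) - f (a • v)) - (f ((-a) • u) - f ((-a) • v)) := by
    intro a ha
    have hna : (-a) ≠ 0 := neg_ne_zero.mpr ha
    have e1 : (2 * a) • u = a • (u + v) + a • (u - v) := by module
    have e2 : (2 * a) • v = a • (u + v) + (-a) • (u - v) := by module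
    have e3 : a • (u + v) = a • u + a • v := by module
    have e4 : a • (u - v) = a • u + (-a) • v := by module
    have e5 : (-a) • (u - v) = (-a) • u + a • v := by module
    have f1 : f ((2 * a) • u) = f (a • (u + v)) + f (a • (u - v)) := by
      rw [e1]; exact hadd a a _ _ ha ha hupv humv horth
    have f2 : f ((2 * a) • v) = f (a • (u + v)) + f ((-a) • (u - v)) := by
      rw [e2]; exact hadd a (-a) _ _ ha hna hupv humv horth
    have f3 : f (a • (u + v)) = f (a • u) + f (a • v) := by
      rw [e3]; exact hadd a a u v ha ha hu hv huv
    have f4 : f (a • (u - v)) = f (a • u) + f ((-a) • v) := by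
      rw [e4]; exact hadd a (-a) u v ha hna hu hv huv
    have f5 : f ((-a) • (u - v)) = f ((-a) • u) + f (a • v) := by
      rw [e5]; exact hadd (-a) a u v hna ha hu hv huv
    linarith
  have odd : ∀ a : ℂ, a ≠ 0 →
      f ((-a) • u) - f ((-a) • v) = -(f (a • u) - f (a • v)) := by
    intro a ha
    have ha2 : (a / 2 : ℂ) ≠ 0 := by
      simp [ha]
    have hna2 : (-(a / 2) : ℂ) ≠ 0 := neg_ne_zero.mpr ha2
    have h1 := keyD (a / 2) ha2
    have h2 := keyD (-(a / 2)) hna2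
    rw [show (2 * (a / 2) : ℂ) = a from by ring] at h1
    rw [show (2 * (-(a / 2)) : ℂ) = -a from by ring,
        show (-(-(a / 2)) : ℂ) = a / 2 from by ring] at h2
    linarith
  have double : ∀ a : ℂ, a ≠ 0 →
      f ((2 * a) • u) - f ((2 * a) • v) = 2 * (f (a • u) - f (a • v)) := by
    intro a ha
    have h1 := keyD a ha
    have h2 := odd a ha
    linarith
  have hpow : ∀ k : ℕ,
      f (((2 : ℂ) ^ k) • u) - f (((2 : ℂ) ^ k) • v) = (2 : ℝ) ^ k * (f u - f v) := by
    intro k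
    induction k with
    | zero => simp
    | succ k ih =>
      have h2k : ((2 : ℂ) ^ k) ≠ 0 := pow_ne_zero _ two_ne_zero
      have := double ((2 : ℂ) ^ k) h2k
      rw [show ((2 : ℂ) * 2 ^ k) = 2 ^ (k + 1) from by ring] at this
      rw [this, ih]
      ring
  -- sublinearity along the sequence 2^k
  have hnu : ‖u‖ ≠ 0 := norm_ne_zero_iff.mpr hu
  have hnormseq : ∀ (w : EuclideanSpace ℂ (Fin n)), ∀ k : ℕ,
      ‖((2 : ℂ) ^ k) • w‖ = (2 : ℝ) ^ k * ‖w‖ := by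
    intro w k
    rw [norm_smul]
    norm_num
  have hseq : ∀ w : EuclideanSpace ℂ (Fin n), w ≠ 0 →
      Filter.Tendsto (fun k : ℕ => f (((2 : ℂ) ^ k) • w) / ‖((2 : ℂ) ^ k) • w‖)
        Filter.atTop (nhds 0) := by
    intro w hw
    apply hsub.comp
    rw [Filter.tendsto_comap_iff]
    have : Filter.Tendsto (fun k : ℕ => (2 : ℝ) ^ k * ‖w‖) Filter.atTop Filter.atTop :=
      (tendsto_pow_atTop_atTop_of_one_lt (by norm_num)).atTop_mul_const
        (norm_pos_iff.mpr hw)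
    refine this.congr fun k => ?_
    exact (hnormseq w k).symm
  have hU := hseq u hu
  have hV := hseq v hv
  have hdiff := hU.sub hV
  rw [sub_zero] at hdiff
  have hconst : Filter.Tendsto (fun _ : ℕ => (f u - f v) / ‖u‖) Filter.atTop (nhds 0) := by
    refine hdiff.congr fun k => ?_
    have hk : ((2 : ℝ) ^ k) ≠ 0 := by positivity
    rw [hnormseq u k, hnormseq v k, ← hnorm, div_sub_div_same, hpow k]
    field_simp
  have : (f u - f v) / ‖u‖ = 0 := tendsto_nhds_unique tendsto_const_nhds hconst
  have := (div_eq_zero_iff.mp this).resolve_right hnu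
  linarith
end

section
/- Let V be a finite-dimensional real vector space, φ ∈ End(V), φ ≠ 0, and 𝔤_φ = V ⋊ ℝ the Lie algebra with bracket [(v,s),(w,t)] = (s·φ(w) - t·φ(v), 0). Let c : im(φ) → ℝ be any function with c(0)=0 and α ∈ V*. Then the function ζ(v,t) = c(φ(v)/t)·t + α(v) for t ≠ 0 and ζ(v,0) = α(v) is a Lie quasi-state on 𝔤_φ (i.e. ℝ-linear on abelian subalgebras). -/
/-- In `𝔤_φ = V ⋊ ℝ` with bracket `[(v,s),(w,t)] = (s·φ(w) - t·φ(v), 0)`, the function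
`ζ(v,t) = c(φ(v)/t)·t + α(v)` (for `t ≠ 0`), `ζ(v,0) = α(v)`, with `c(0) = 0` and `α`
linear, is a Lie quasi-state: ℝ-linear on abelian subalgebras. Elements `(v,s)`, `(w,t)`
commute iff `s·φ(w) = t·φ(v)`. -/
theorem semidirect_formula_is_lie_quasi_state
    {V : Type*} [AddCommGroup V] [Module ℝ V] [FiniteDimensional ℝ V]
    (φ : V →ₗ[ℝ] V) (hφ : φ ≠ 0)
    (c : V → ℝ) (hc0 : c 0 = 0) (α : V →ₗ[ℝ] ℝ)
    (ζ : V × ℝ → ℝ)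
    (hζ : ∀ p : V × ℝ, ζ p = (if p.2 = 0 then 0 else c (p.2⁻¹ • φ p.1) * p.2) + α p.1) :
    ∀ (a b : ℝ) (p q : V × ℝ), p.2 • φ q.1 = q.2 • φ p.1 →
      ζ (a • p + b • q) = a * ζ p + b * ζ q := by
  rintro a b ⟨v, s⟩ ⟨w, t⟩ hcomm
  simp only at hcomm
  rw [hζ, hζ, hζ]
  simp only [Prod.fst_add, Prod.snd_add, Prod.smul_fst, Prod.smul_snd, smul_eq_mul,
    map_add, map_smul]
  have hα : α (a • v) + α (b • w) = a * α v + b * α w := by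
    simp [smul_eq_mul]
  suffices h : (if a * s + b * t = 0 then 0
      else c ((a * s + b * t)⁻¹ • (a • φ v + b • φ w)) * (a * s + b * t))
      = a * (if s = 0 then 0 else c (s⁻¹ • φ v) * s)
        + b * (if t = 0 then 0 else c (t⁻¹ • φ w) * t) by
    rw [h]; split_ifs <;> ring
  by_cases hs : s = 0 <;> by_cases ht : t = 0
  · subst hs; subst ht
    have hv : (0:ℝ) • φ w = (0:ℝ) • φ v := hcomm
    simp
  · subst hs
    have hv : φ v = 0 := by
      have := hcomm.symm
      rw [zero_smul] at this
      rcases smul_eq_zero.mp this with h | h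
      · exact absurd h ht
      · exact h
    simp only [hv, smul_zero, zero_add, mul_zero, zero_mul, ite_self]
    by_cases hb : b = 0
    · simp [hb]
    · rw [if_neg (mul_ne_zero hb ht), if_neg ht]
      have : (b * t)⁻¹ • b • φ w = t⁻¹ • φ w := by
        rw [smul_smul]
        congr 1
        field_simp
      rw [this]
      ring
  · subst ht
    have hw : φ w = 0 := by
      rw [zero_smul] at hcomm
      rcases smul_eq_zero.mp hcomm with h | h
      · exact absurd h hs
      · exact h
    simp only [hw, smul_zero, add_zero, mul_zero, zero_mul, ite_self]
    by_cases ha : a = 0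
    · simp [ha]
    · rw [if_neg (mul_ne_zero ha hs), if_neg hs]
      have : (a * s)⁻¹ • a • φ v = s⁻¹ • φ v := by
        rw [smul_smul]
        congr 1
        field_simp
      rw [this]
      ring
  · obtain ⟨u, hu⟩ : ∃ u, u = t⁻¹ • φ w := ⟨_, rfl⟩
    have hw : φ w = t • u := by rw [hu, smul_smul, mul_inv_cancel₀ ht, one_smul]
    have hv : φ v = s • u := by
      rw [hu, smul_smul]
      have : φ v = t⁻¹ • (s • φ w) := by
        rw [hcomm, smul_smul, inv_mul_cancel₀ ht, one_smul]
      rw [this, smul_smul, mul_comm]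
    have hsv : s⁻¹ • φ v = u := by
      rw [hv, smul_smul, inv_mul_cancel₀ hs, one_smul]
    have hcomb : a • φ v + b • φ w = (a * s + b * t) • u := by
      rw [hv, hw, smul_smul, smul_smul, add_smul]
    rw [if_neg hs, if_neg ht, hsv, ← hu, hcomb]
    by_cases hst : a * s + b * t = 0
    · rw [if_pos hst]
      have : a * (c u * s) + b * (c u * t) = c u * (a * s + b * t) := by ring
      rw [this, hst, mul_zero]
    · rw [if_neg hst, smul_smul, inv_mul_cancel₀ hst, one_smul]
      ring
end

section
/- Let V be a finite-dimensional real vector space, φ ∈ End(V), and 𝔤_φ = V ⋊ ℝ with bracket [(v,s),(w,t)]=(sφ(w)-tφ(v),0). Then for all (w,s),(v,t) ∈ 𝔤_φ with s ≠ 0: exp(ad(w,s))(v,t) = (exp(sφ)v - (t/s)(exp(sφ)w - w), t), where exp(sφ) is the matrix exponential. -/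
/-!
On `V × {0}` the operator `ad(w,s)` acts as `sφ` on the first factor, so `exp(ad(w,s))`
acts there as `exp(sφ)`; and `ad(w,s)` kills `(w,s)`, which `exp(ad(w,s))` therefore fixes.
For `s ≠ 0` these two pieces span everything:
`(v,t) = (v - (t/s)w, 0) + (t/s)(w,s)`.
-/

/-- The operator `ad(w,s)` on `𝔤_φ = V ⋊ ℝ`, sending `(v,t)` to `(s·φ(v) - t·φ(w), 0)`. -/
noncomputable def adSemidirect {V : Type*} [NormedAddCommGroup V] [NormedSpace ℝ V]
    (φ : V →L[ℝ] V) (w : V) (s : ℝ) : (V × ℝ) →L[ℝ] (V × ℝ) :=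
  ((s • φ.comp (ContinuousLinearMap.fst ℝ V ℝ)) -
    (ContinuousLinearMap.snd ℝ V ℝ).smulRight (φ w)).prod 0

open NormedSpace ContinuousLinearMap

section Intertwining

variable {𝕜 E F : Type*} [RCLike 𝕜]
  [NormedAddCommGroup E] [NormedSpace 𝕜 E] [CompleteSpace E]
  [NormedAddCommGroup F] [NormedSpace 𝕜 F] [CompleteSpace F]

theorem exp_apply_of_comp_eq_comp {A : F →L[𝕜] F} {B : E →L[𝕜] E} {L : E →L[𝕜] F}
    (h : A ∘L L = L ∘L B) (x : E) : exp A (L x) = L (exp B x) := by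
  have hpow : ∀ n : ℕ, (A ^ n) ∘L L = L ∘L (B ^ n) := by
    intro n
    induction n with
    | zero => rfl
    | succ n ih =>
      rw [pow_succ, pow_succ, ContinuousLinearMap.mul_def, ContinuousLinearMap.mul_def,
        comp_assoc, h, ← comp_assoc, ih, comp_assoc]
  have hterms : ∀ n : ℕ,
      (((n.factorial : 𝕜)⁻¹) • A ^ n) (L x) = L ((((n.factorial : 𝕜)⁻¹) • B ^ n) x) := by
    intro n
    rw [smul_apply, smul_apply, map_smul, ← comp_apply, hpow, comp_apply]
  have hA : HasSum (fun n : ℕ => (((n.factorial : 𝕜)⁻¹) • A ^ n) (L x)) (exp A (L x)) :=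
    (exp_series_hasSum_exp' (𝕂 := 𝕜) A).mapL (apply 𝕜 F (L x))
  have hB : HasSum (fun n : ℕ => L ((((n.factorial : 𝕜)⁻¹) • B ^ n) x)) (L (exp B x)) :=
    ((exp_series_hasSum_exp' (𝕂 := 𝕜) B).mapL (apply 𝕜 E x)).mapL L
  exact hA.unique (by simpa only [hterms] using hB)

theorem exp_apply_eq_self_of_apply_eq_zero {A : F →L[𝕜] F} {x : F} (hx : A x = 0) :
    exp A x = x := by
  have h : A ∘L toSpanSingleton 𝕜 x = toSpanSingleton 𝕜 x ∘L 0 := by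
    ext; simp [hx]
  simpa using exp_apply_of_comp_eq_comp h 1

end Intertwining

section Semidirect

variable {V : Type*} [NormedAddCommGroup V] [NormedSpace ℝ V]

theorem adSemidirect_apply (φ : V →L[ℝ] V) (w : V) (s : ℝ) (v : V) (t : ℝ) :
    adSemidirect φ w s (v, t) = (s • φ v - t • φ w, 0) := rfl

theorem adSemidirect_comp_inl (φ : V →L[ℝ] V) (w : V) (s : ℝ) :
    adSemidirect φ w s ∘L inl ℝ V ℝ = inl ℝ V ℝ ∘L (s • φ) := by
  ext v <;> simp [adSemidirect_apply]

theorem adSemidirect_apply_self (φ : V →L[ℝ] V) (w : V) (s : ℝ) :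
    adSemidirect φ w s (w, s) = 0 := by
  simp [adSemidirect_apply]

end Semidirect

/-- Explicit formula for `exp(ad(w,s))` on `𝔤_φ = V ⋊ ℝ`. -/
theorem exp_adSemidirect_formula
    {V : Type*} [NormedAddCommGroup V] [NormedSpace ℝ V] [FiniteDimensional ℝ V]
    (φ : V →L[ℝ] V) (w : V) (s : ℝ) (hs : s ≠ 0) (v : V) (t : ℝ) :
    NormedSpace.exp (adSemidirect φ w s) (v, t) =
      (NormedSpace.exp (s • φ) v - (t / s) • (NormedSpace.exp (s • φ) w - w), t) := by
  have hsplit : ((v, t) : V × ℝ) = inl ℝ V ℝ (v - (t / s) • w) + (t / s) • (w, s) := by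
    ext <;> simp [hs]
  rw [hsplit, map_add, map_smul, exp_apply_of_comp_eq_comp (adSemidirect_comp_inl φ w s),
    exp_apply_eq_self_of_apply_eq_zero (adSemidirect_apply_self φ w s)]
  ext
  · simp only [inl_apply, Prod.fst_add, Prod.smul_fst, Prod.fst_sub, map_sub, map_smul, smul_sub]
    abel
  · simp [hs]
end

section
/- Let 𝔥₃ be the 3-dimensional Heisenberg algebra with basis X, Y, Z satisfying [X,Y]=Z, [X,Z]=[Y,Z]=0. Let a ∈ ℝ and c : ℝ → ℝ continuous with c(0)=0 and c(λ)/|λ| → 0 as |λ| → ∞. Then ζ(xX + yY + zZ) := c(y/x)·x + a·y for x ≠ 0 and ζ(yY + zZ) := a·y is a continuous Lie quasi-state on 𝔥₃ invariant under the adjoint action of the Heisenberg group. -/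
/-- The bracket of the 3-dimensional Heisenberg algebra, in coordinates
`(x, y, z) ↔ xX + yY + zZ` with `[X,Y] = Z`, `Z` central. -/
def heisBracket (w u : ℝ × ℝ × ℝ) : ℝ × ℝ × ℝ :=
  (0, 0, w.1 * u.2.1 - u.1 * w.2.1)

private lemma key_bound (c : ℝ → ℝ) (ε M K : ℝ) (hε : 0 ≤ ε) (hK0 : 0 ≤ K)
    (hK : ∀ l, |l| ≤ M → |c l| ≤ K) (hM : ∀ l, M ≤ |l| → |c l| ≤ ε * |l|) :
    ∀ x y : ℝ, |if x = 0 then (0:ℝ) else c (y / x) * x| ≤ K * |x| + ε * |y| := by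
  intro x y
  by_cases hx : x = 0
  · simp [hx]
    positivity
  · rw [if_neg hx, abs_mul]
    rcases le_total (|y / x|) M with h | h
    · have h1 := hK _ h
      nlinarith [abs_nonneg x, abs_nonneg y, mul_nonneg hε (abs_nonneg y),
        mul_le_mul_of_nonneg_right h1 (abs_nonneg x)]
    · have h2 := hM _ h
      have h3 : |y / x| * |x| = |y| := by
        rw [← abs_mul]
        field_simp
      nlinarith [mul_le_mul_of_nonneg_right h2 (abs_nonneg x),
        mul_nonneg hK0 (abs_nonneg x)]

private lemma key_cont (c : ℝ → ℝ) (hc : Continuous c)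
    (hsub : Filter.Tendsto (fun l : ℝ => c l / |l|)
      (Filter.comap (fun l : ℝ => |l|) Filter.atTop) (nhds 0)) :
    Continuous (fun p : ℝ × ℝ × ℝ => if p.1 = 0 then 0 else c (p.2.1 / p.1) * p.1) := by
  have hM : ∀ ε > (0:ℝ), ∃ M : ℝ, 1 ≤ M ∧ ∀ l, M ≤ |l| → |c l| ≤ ε * |l| := by
    intro ε hε
    have h := Metric.tendsto_nhds.mp hsub ε hε
    rw [(Filter.atTop_basis.comap (fun l : ℝ => |l|)).eventually_iff] at h
    obtain ⟨M, -, hM⟩ := h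
    refine ⟨max M 1, le_max_right _ _, fun l hl => ?_⟩
    have h1 : (1:ℝ) ≤ |l| := le_trans (le_max_right M 1) hl
    have h2 := hM (x := l) (le_trans (le_max_left M 1) hl)
    rw [Real.dist_eq, sub_zero, abs_div, abs_abs] at h2
    have hpos : 0 < |l| := by linarith
    have : |c l| / |l| < ε := by
      calc |c l| / |l| ≤ |c l| / |l| := le_refl _
      _ < ε := h2
    nlinarith [div_le_iff₀ hpos |>.mp this.le]
  rw [continuous_iff_continuousAt]
  intro p0
  by_cases h : p0.1 = 0
  · -- continuity at x = 0
    rw [Metric.continuousAt_iff]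
    intro ε' hε'
    set ε : ℝ := ε' / (2 * (|p0.2.1| + 1)) with hεdef
    have hεpos : 0 < ε := by positivity
    obtain ⟨M, hM1, hMb⟩ := hM ε hεpos
    obtain ⟨K0, hK0⟩ := (isCompact_Icc (a := -M) (b := M)).exists_bound_of_continuousOn
      hc.continuousOn
    set K : ℝ := max K0 0 with hKdef
    have hK : ∀ l, |l| ≤ M → |c l| ≤ K := by
      intro l hl
      have := hK0 l (abs_le.mp hl)
      simp only [Real.norm_eq_abs] at this
      exact le_trans this (le_max_left _ _)
    have hKnn : 0 ≤ K := le_max_right _ _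
    refine ⟨min (ε' / (2 * (K + 1))) 1, by positivity, fun {p} hp => ?_⟩
    have hd1 : dist p.1 p0.1 < min (ε' / (2 * (K + 1))) 1 :=
      lt_of_le_of_lt (by rw [Prod.dist_eq]; exact le_max_left _ _) hp
    have hd2 : dist p.2.1 p0.2.1 < min (ε' / (2 * (K + 1))) 1 := by
      refine lt_of_le_of_lt ?_ hp
      rw [Prod.dist_eq, Prod.dist_eq]
      exact le_trans (le_max_left _ _) (le_max_right _ _)
    rw [Real.dist_eq] at hd1 hd2
    have hx : |p.1| < ε' / (2 * (K + 1)) := by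
      rw [h, sub_zero] at hd1
      exact lt_of_lt_of_le hd1 (min_le_left _ _)
    have hy : |p.2.1| < |p0.2.1| + 1 := by
      have := abs_sub_abs_le_abs_sub p.2.1 p0.2.1
      have h2 : |p.2.1 - p0.2.1| < 1 := lt_of_lt_of_le hd2 (min_le_right _ _)
      linarith
    have hb := key_bound c ε M K hεpos.le hKnn hK hMb p.1 p.2.1
    have hF0 : (if p0.1 = 0 then (0:ℝ) else c (p0.2.1 / p0.1) * p0.1) = 0 := if_pos h
    rw [Real.dist_eq, hF0, sub_zero]
    have e1 : K * |p.1| < ε' / 2 := by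
      have : K * |p.1| ≤ K * (ε' / (2 * (K + 1))) :=
        mul_le_mul_of_nonneg_left hx.le hKnn
      have h2 : K * (ε' / (2 * (K + 1))) < ε' / 2 := by
        rw [mul_div_assoc', div_lt_div_iff₀ (by positivity) (by norm_num)]
        nlinarith
      linarith
    have e2 : ε * |p.2.1| ≤ ε * (|p0.2.1| + 1) := mul_le_mul_of_nonneg_left hy.le hεpos.le
    have e3 : ε * (|p0.2.1| + 1) = ε' / 2 := by
      rw [hεdef]
      field_simp
    calc |if p.1 = 0 then (0:ℝ) else c (p.2.1 / p.1) * p.1| ≤ K * |p.1| + ε * |p.2.1| := hb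
    _ < ε' / 2 + ε' / 2 := by linarith
    _ = ε' := by ring
  · -- continuity at x ≠ 0
    have hdiv : ContinuousAt (fun p : ℝ × ℝ × ℝ => p.2.1 / p.1) p0 :=
      (continuous_snd.fst.continuousAt).div continuous_fst.continuousAt h
    have hg : ContinuousAt (fun p : ℝ × ℝ × ℝ => c (p.2.1 / p.1) * p.1) p0 :=
      (hc.continuousAt.comp hdiv).mul continuous_fst.continuousAt
    have hev : ∀ᶠ p : ℝ × ℝ × ℝ in nhds p0, p.1 ≠ 0 :=
      (isOpen_compl_singleton.preimage continuous_fst).mem_nhds h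
    exact hg.congr (hev.mono fun p hp => (if_neg hp).symm)

private lemma key_lin (c : ℝ → ℝ) (r s x1 y1 x2 y2 : ℝ) (h : x1 * y2 = x2 * y1) :
    (if r * x1 + s * x2 = 0 then (0:ℝ)
      else c ((r * y1 + s * y2) / (r * x1 + s * x2)) * (r * x1 + s * x2))
    = r * (if x1 = 0 then 0 else c (y1 / x1) * x1)
      + s * (if x2 = 0 then 0 else c (y2 / x2) * x2) := by
  by_cases h1 : x1 = 0
  · by_cases h2 : x2 = 0
    · simp [h1, h2]
    · -- x1 = 0, x2 ≠ 0 : then y1 = 0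
      have hy1 : y1 = 0 := by
        have := h
        rw [h1] at this
        simp at this
        rcases this with h' | h'
        · exact absurd h' h2
        · exact h'
      by_cases hs : s = 0
      · simp [h1, hy1, hs]
      · have hne : r * x1 + s * x2 ≠ 0 := by
          rw [h1]; simpa using mul_ne_zero hs h2
        rw [if_neg hne, if_pos h1, if_neg h2, h1, hy1]
        have : (r * 0 + s * y2) / (r * 0 + s * x2) = y2 / x2 := by
          rw [mul_zero, zero_add, zero_add, mul_div_mul_left _ _ hs]
        rw [this]
        ring
  · -- x1 ≠ 0
    have hy2 : y2 = x2 * (y1 / x1) := by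
      field_simp
      linarith [h]
    have hy : r * y1 + s * y2 = (r * x1 + s * x2) * (y1 / x1) := by
      rw [hy2]
      field_simp
    have hq : (if x2 = 0 then (0:ℝ) else c (y2 / x2) * x2) = c (y1 / x1) * x2 := by
      by_cases h2 : x2 = 0
      · simp [h2]
      · rw [if_neg h2, hy2, mul_div_cancel_left₀ _ h2]
    by_cases hx : r * x1 + s * x2 = 0
    · rw [if_pos hx, if_neg h1, hq]
      have heq : r * (c (y1 / x1) * x1) + s * (c (y1 / x1) * x2)
          = c (y1 / x1) * (r * x1 + s * x2) := by ring
      rw [heq, hx, mul_zero]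
    · rw [if_neg hx, if_neg h1, hq, hy, mul_div_cancel_left₀ _ hx]
      ring

/-- The function `ζ(xX+yY+zZ) = c(y/x)·x + a·y` (for `x ≠ 0`; `= a·y` for `x = 0`),
with `c` continuous and sublinear, is a continuous Lie quasi-state on `𝔥₃` invariant
under the adjoint action `exp(ad W) = Id + ad W` of the Heisenberg group. -/
theorem heisenberg_quasi_state
    (a : ℝ) (c : ℝ → ℝ) (hc : Continuous c)
    (hsub : Filter.Tendsto (fun l : ℝ => c l / |l|)
      (Filter.comap (fun l : ℝ => |l|) Filter.atTop) (nhds 0))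
    (ζ : ℝ × ℝ × ℝ → ℝ)
    (hζ : ∀ p : ℝ × ℝ × ℝ,
      ζ p = (if p.1 = 0 then 0 else c (p.2.1 / p.1) * p.1) + a * p.2.1) :
    Continuous ζ ∧
    (∀ (r s : ℝ) (p q : ℝ × ℝ × ℝ), p.1 * q.2.1 = q.1 * p.2.1 →
      ζ (r • p + s • q) = r * ζ p + s * ζ q) ∧
    (∀ w u : ℝ × ℝ × ℝ, ζ (u + heisBracket w u) = ζ u) := by
  have hζeq : ζ = fun p : ℝ × ℝ × ℝ =>
      (if p.1 = 0 then 0 else c (p.2.1 / p.1) * p.1) + a * p.2.1 := funext hζ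
  refine ⟨?_, ?_, ?_⟩
  · rw [hζeq]
    exact (key_cont c hc hsub).add (continuous_const.mul continuous_snd.fst)
  · intro r s p q hpq
    rw [hζ, hζ, hζ]
    have h1 : (r • p + s • q).1 = r * p.1 + s * q.1 := rfl
    have h2 : (r • p + s • q).2.1 = r * p.2.1 + s * q.2.1 := rfl
    rw [h1, h2, key_lin c r s p.1 p.2.1 q.1 q.2.1 hpq]
    ring
  · intro w u
    rw [hζ, hζ]
    have h1 : (u + heisBracket w u).1 = u.1 := by simp [heisBracket]
    have h2 : (u + heisBracket w u).2.1 = u.2.1 := by simp [heisBracket]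
    rw [h1, h2]
end

section
/- The space of continuous Ad-invariant Lie quasi-states on the 3-dimensional Heisenberg algebra 𝔥₃ is infinite-dimensional. Concretely, the map sending a continuous sublinear function c : ℝ → ℝ with c(0)=0 to the quasi-state ζ_c(xX+yY+zZ) = c(y/x)·x (x≠0), ζ_c(yY+zZ)=0, is linear and injective. -/
/-- The normalized quasi-state `ζ_c` on `𝔥₃` attached to `c : ℝ → ℝ`. -/
noncomputable def heisQS (c : ℝ → ℝ) (p : ℝ × ℝ × ℝ) : ℝ :=
  if p.1 = 0 then 0 else c (p.2.1 / p.1) * p.1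

/-- `c : ℝ → ℝ` is sublinear if `c(λ)/|λ| → 0` as `|λ| → ∞`. -/
def SublinearR (c : ℝ → ℝ) : Prop :=
  Filter.Tendsto (fun l : ℝ => c l / |l|)
    (Filter.comap (fun l : ℝ => |l|) Filter.atTop) (nhds 0)

lemma sublin_spec {c : ℝ → ℝ} (h : SublinearR c) {δ : ℝ} (hδ : 0 < δ) :
    ∃ M : ℝ, 1 ≤ M ∧ ∀ l : ℝ, M ≤ |l| → |c l| ≤ δ * |l| := by
  have h1 := Metric.tendsto_nhds.mp h δ hδ
  rw [Filter.eventually_comap] at h1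
  rw [Filter.eventually_atTop] at h1
  obtain ⟨M, hM⟩ := h1
  refine ⟨max M 1, le_max_right _ _, fun l hl => ?_⟩
  have hl1 : (1:ℝ) ≤ |l| := le_trans (le_max_right M 1) hl
  have hlpos : (0:ℝ) < |l| := lt_of_lt_of_le one_pos hl1
  have := hM |l| (le_trans (le_max_left M 1) hl) l rfl
  rw [Real.dist_eq, sub_zero, abs_div, abs_abs] at this
  have := (div_le_iff₀ hlpos).mp this.le
  linarith

lemma heisQS_cont {c : ℝ → ℝ} (hc : Continuous c) (hs : SublinearR c) :
    Continuous (heisQS c) := by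
  rw [continuous_iff_continuousAt]
  intro p₀
  by_cases h0 : p₀.1 = 0
  · -- at first coordinate zero
    have hval : heisQS c p₀ = 0 := by simp [heisQS, h0]
    rw [ContinuousAt, hval, Metric.tendsto_nhds]
    intro ε hε
    set y₀ := p₀.2.1 with hy₀
    have hδ : (0:ℝ) < ε / (2 * (|y₀| + 1)) := by positivity
    obtain ⟨M, hM1, hM⟩ := sublin_spec hs hδ
    -- bound of c on [-M, M]
    obtain ⟨B, hB⟩ : ∃ B : ℝ, ∀ l ∈ Set.Icc (-M) M, |c l| ≤ B := by
      obtain ⟨B, hB⟩ := (isCompact_Icc (a := -M) (b := M)).exists_bound_of_continuousOn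
        hc.continuousOn
      exact ⟨B, fun l hl => by simpa using hB l hl⟩
    have hB0 : 0 ≤ B := le_trans (abs_nonneg _) (hB (-M) ⟨le_refl _, by linarith⟩)
    have h1 : ∀ᶠ p : ℝ × ℝ × ℝ in nhds p₀, |p.1| < ε / (2 * (B + 1)) := by
      have : Filter.Tendsto (fun p : ℝ × ℝ × ℝ => p.1) (nhds p₀) (nhds 0) := by
        simpa [h0] using (continuous_fst.tendsto p₀)
      have := this.eventually (eventually_abs_sub_lt 0 (by positivity :
        (0:ℝ) < ε / (2 * (B + 1))))
      simpa using this
    have h2 : ∀ᶠ p : ℝ × ℝ × ℝ in nhds p₀, |p.2.1 - y₀| < 1 := by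
      have : Filter.Tendsto (fun p : ℝ × ℝ × ℝ => p.2.1) (nhds p₀) (nhds y₀) :=
        ((continuous_fst.comp continuous_snd).tendsto p₀)
      exact this.eventually (eventually_abs_sub_lt y₀ one_pos)
    filter_upwards [h1, h2] with p hp1 hp2
    rw [Real.dist_eq, sub_zero]
    by_cases hx : p.1 = 0
    · simpa [heisQS, hx] using hε
    · rw [heisQS, if_neg hx, abs_mul]
      have hxpos : 0 < |p.1| := abs_pos.mpr hx
      set l := p.2.1 / p.1 with hl
      by_cases hlM : |l| ≤ M
      · have : |c l| ≤ B := hB l (abs_le.mp hlM |>.imp (fun h => by linarith) id)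
        calc |c l| * |p.1| ≤ B * |p.1| := by nlinarith
          _ < B * (ε / (2 * (B + 1))) + ε / (2 * (B + 1)) := by nlinarith
          _ ≤ ε := by
            have hB1 : (0:ℝ) < B + 1 := by linarith
            have h6 : B * (ε / (2 * (B + 1))) + ε / (2 * (B + 1))
                = (B + 1) * (ε / (2 * (B + 1))) := by ring
            have h7 : (B + 1) * (ε / (2 * (B + 1))) = ε / 2 := by
              field_simp
            rw [h6, h7]; linarith
      · push_neg at hlM
        have h3 : |c l| ≤ ε / (2 * (|y₀| + 1)) * |l| := hM l hlM.le
        have h4 : |l| * |p.1| = |p.2.1| := by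
          rw [← abs_mul, hl, div_mul_cancel₀ _ hx]
        have h5 : |p.2.1| ≤ |y₀| + 1 := by
          have := abs_sub_abs_le_abs_sub p.2.1 y₀
          linarith
        calc |c l| * |p.1| ≤ ε / (2 * (|y₀| + 1)) * |l| * |p.1| := by nlinarith
          _ = ε / (2 * (|y₀| + 1)) * |p.2.1| := by rw [mul_assoc, h4]
          _ ≤ ε / (2 * (|y₀| + 1)) * (|y₀| + 1) := by nlinarith
          _ = ε / 2 := by field_simp
          _ < ε := by linarith
  · -- first coordinate nonzero: locally equal to a continuous function
    have hopen : ∀ᶠ p : ℝ × ℝ × ℝ in nhds p₀, p.1 ≠ 0 :=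
      (continuous_fst.tendsto p₀).eventually (eventually_ne_nhds h0)
    have heq : ∀ᶠ p : ℝ × ℝ × ℝ in nhds p₀,
        heisQS c p = c (p.2.1 / p.1) * p.1 := by
      filter_upwards [hopen] with p hp
      simp [heisQS, hp]
    have hcont : ContinuousAt (fun p : ℝ × ℝ × ℝ => c (p.2.1 / p.1) * p.1) p₀ := by
      apply ContinuousAt.mul _ continuous_fst.continuousAt
      exact (hc.continuousAt).comp
        (((continuous_fst.comp continuous_snd).continuousAt).div
          continuous_fst.continuousAt h0)
    exact hcont.congr (Filter.EventuallyEq.symm heq)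

lemma heisQS_quasi {c : ℝ → ℝ} (r s : ℝ) (p q : ℝ × ℝ × ℝ)
    (h : p.1 * q.2.1 = q.1 * p.2.1) :
    heisQS c (r • p + s • q) = r * heisQS c p + s * heisQS c q := by
  have hfst : (r • p + s • q).1 = r * p.1 + s * q.1 := rfl
  have hsnd : (r • p + s • q).2.1 = r * p.2.1 + s * q.2.1 := rfl
  simp only [heisQS, hfst, hsnd]
  by_cases hp : p.1 = 0
  · by_cases hq : q.1 = 0
    · simp [hp, hq]
    · have hp2 : p.2.1 = 0 := by
        rw [hp, zero_mul] at h
        exact (mul_eq_zero.mp h.symm).resolve_left hq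
      rw [if_pos hp, if_neg hq, hp, hp2]
      by_cases hs : s = 0
      · simp [hs]
      · rw [if_neg (by simpa [hs] using mul_ne_zero hs hq : ¬(r * 0 + s * q.1 = 0))]
        have harg : (r * 0 + s * q.2.1) / (r * 0 + s * q.1) = q.2.1 / q.1 := by
          rw [mul_zero, zero_add, zero_add, mul_div_mul_left _ _ hs]
        rw [harg]; ring
  · have hq2 : q.2.1 * p.1 = q.1 * p.2.1 := by linarith [h]
    rw [if_neg hp]
    by_cases hq : q.1 = 0
    · have hq20 : q.2.1 = 0 := by
        rw [hq, zero_mul] at hq2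
        exact (mul_eq_zero.mp hq2).resolve_right hp
      rw [if_pos hq, hq, hq20]
      by_cases hr : r = 0
      · simp [hr]
      · rw [if_neg (by simpa [hr] using mul_ne_zero hr hp : ¬(r * p.1 + s * 0 = 0))]
        have harg : (r * p.2.1 + s * 0) / (r * p.1 + s * 0) = p.2.1 / p.1 := by
          rw [mul_zero, add_zero, add_zero, mul_div_mul_left _ _ hr]
        rw [harg]; ring
    · rw [if_neg hq]
      have hkey : q.2.1 / q.1 = p.2.1 / p.1 := by
        rw [div_eq_div_iff hq hp]; linarith [hq2]
      by_cases hx : r * p.1 + s * q.1 = 0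
      · rw [if_pos hx, hkey]
        have : r * (c (p.2.1 / p.1) * p.1) + s * (c (p.2.1 / p.1) * q.1)
            = c (p.2.1 / p.1) * (r * p.1 + s * q.1) := by ring
        rw [this, hx, mul_zero]
      · rw [if_neg hx, hkey]
        have harg : (r * p.2.1 + s * q.2.1) / (r * p.1 + s * q.1) = p.2.1 / p.1 := by
          rw [div_eq_div_iff hx hp]
          have h1 : q.2.1 * p.1 = p.2.1 * q.1 := by linarith [hq2]
          linear_combination s * h1
        rw [harg]; ring

lemma bounded_sublinear {c : ℝ → ℝ} {B : ℝ} (hB : ∀ l, |c l| ≤ B) : SublinearR c := by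
  have hB0 : 0 ≤ B := le_trans (abs_nonneg _) (hB 0)
  have htend : Filter.Tendsto (fun l : ℝ => B / |l|)
      (Filter.comap (fun l : ℝ => |l|) Filter.atTop) (nhds 0) :=
    Filter.Tendsto.div_atTop tendsto_const_nhds Filter.tendsto_comap
  refine squeeze_zero_norm (fun l => ?_) htend
  rcases eq_or_ne l 0 with h | h
  · simp [h]
  · rw [Real.norm_eq_abs, abs_div, abs_abs]
    gcongr
    exact hB l

noncomputable def heisBump (n : ℕ) (l : ℝ) : ℝ := max 0 (1 - 2 * |l - (n + 1)|)

lemma heisBump_cont (n : ℕ) : Continuous (heisBump n) := by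
  apply continuous_const.max
  fun_prop

lemma heisBump_zero (n : ℕ) : heisBump n 0 = 0 := by
  have h1 : |(0:ℝ) - (n + 1)| = n + 1 := by
    rw [zero_sub, abs_neg, abs_of_nonneg (by positivity)]
  rw [heisBump, h1, max_eq_left]
  have : (0:ℝ) ≤ n := Nat.cast_nonneg n
  linarith

lemma heisBump_bounded (n : ℕ) : ∀ l, |heisBump n l| ≤ 1 := by
  intro l
  rw [abs_of_nonneg (le_max_left _ _)]
  apply max_le one_pos.le
  have := abs_nonneg (l - (n + 1 : ℝ))
  linarith

lemma heisBump_eval (n m : ℕ) : heisBump n ((m : ℝ) + 1) = if m = n then 1 else 0 := by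
  rcases eq_or_ne m n with h | h
  · subst h
    simp [heisBump]
  · rw [if_neg h, heisBump]
    have h1 : (1:ℝ) ≤ |(m : ℝ) + 1 - (n + 1)| := by
      have : (m:ℝ) + 1 - (n + 1) = (m:ℝ) - n := by ring
      rw [this]
      rcases Nat.lt_or_ge m n with hmn | hmn
      · have : ((m:ℝ) + 1) ≤ n := by exact_mod_cast hmn
        rw [abs_sub_comm, abs_of_nonneg (by linarith)]; linarith
      · have hnm : n < m := lt_of_le_of_ne hmn (Ne.symm h)
        have : ((n:ℝ) + 1) ≤ m := by exact_mod_cast hnm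
        rw [abs_of_nonneg (by linarith)]; linarith
    rw [max_eq_left (by linarith)]

lemma heisQS_eval (c : ℝ → ℝ) (y : ℝ) : heisQS c (1, y, 0) = c y := by
  simp [heisQS]

/-- The map `c ↦ ζ_c` from continuous sublinear functions with `c(0) = 0` to
Ad-invariant continuous Lie quasi-states on `𝔥₃` is linear and injective; in
particular the space of continuous Ad-invariant Lie quasi-states on `𝔥₃` is
infinite-dimensional. -/
theorem heisenberg_quasi_states_infinite_dimensional :
    (∀ (c₁ c₂ : ℝ → ℝ) (r s : ℝ) (p : ℝ × ℝ × ℝ),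
      heisQS (fun l => r * c₁ l + s * c₂ l) p = r * heisQS c₁ p + s * heisQS c₂ p) ∧
    (∀ c₁ c₂ : ℝ → ℝ, Continuous c₁ → Continuous c₂ → c₁ 0 = 0 → c₂ 0 = 0 →
      SublinearR c₁ → SublinearR c₂ → (∀ p, heisQS c₁ p = heisQS c₂ p) → c₁ = c₂) ∧
    (∀ c : ℝ → ℝ, Continuous c → c 0 = 0 → SublinearR c →
      Continuous (heisQS c) ∧
      (∀ (r s : ℝ) (p q : ℝ × ℝ × ℝ), p.1 * q.2.1 = q.1 * p.2.1 →
        heisQS c (r • p + s • q) = r * heisQS c p + s * heisQS c q) ∧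
      (∀ w u : ℝ × ℝ × ℝ, heisQS c (u + heisBracket w u) = heisQS c u)) ∧
    ¬ FiniteDimensional ℝ
      ↥(Submodule.span ℝ {f : ℝ × ℝ × ℝ → ℝ |
          ∃ c : ℝ → ℝ, Continuous c ∧ c 0 = 0 ∧ SublinearR c ∧ f = heisQS c}) := by
  refine ⟨?_, ?_, ?_, ?_⟩
  · intro c₁ c₂ r s p
    by_cases h : p.1 = 0 <;> simp [heisQS, h] <;> ring
  · intro c₁ c₂ _ _ _ _ _ _ h
    funext l
    have := h (1, l, 0)
    rwa [heisQS_eval, heisQS_eval] at this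
  · intro c hc hc0 hs
    refine ⟨heisQS_cont hc hs, fun r s p q h => heisQS_quasi r s p q h, fun w u => ?_⟩
    have h1 : (u + heisBracket w u).1 = u.1 := by simp [heisBracket]
    have h2 : (u + heisBracket w u).2.1 = u.2.1 := by simp [heisBracket]
    simp only [heisQS, h1, h2]
  · intro hfd
    set S := Submodule.span ℝ {f : ℝ × ℝ × ℝ → ℝ |
        ∃ c : ℝ → ℝ, Continuous c ∧ c 0 = 0 ∧ SublinearR c ∧ f = heisQS c} with hS
    have hmem : ∀ n : ℕ, heisQS (heisBump n) ∈ S := by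
      intro n
      apply Submodule.subset_span
      exact ⟨heisBump n, heisBump_cont n, heisBump_zero n,
        bounded_sublinear (heisBump_bounded n), rfl⟩
    set fam : ℕ → S := fun n => ⟨heisQS (heisBump n), hmem n⟩ with hfam
    have hli : LinearIndependent ℝ fam := by
      apply LinearIndependent.of_comp S.subtype
      rw [linearIndependent_iff']
      intro t g hsum i hi
      have h1 := congrFun hsum ((1:ℝ), ((i:ℝ)+1), (0:ℝ))
      simp only [Finset.sum_apply, Pi.smul_apply, smul_eq_mul, Pi.zero_apply,
        Function.comp_apply, Submodule.coe_subtype] at h1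
      have h2 : ∀ j ∈ t, g j * (fam j : (ℝ × ℝ × ℝ) → ℝ) ((1:ℝ), ((i:ℝ)+1), (0:ℝ))
          = if j = i then g j else 0 := by
        intro j _
        have : (fam j : (ℝ × ℝ × ℝ) → ℝ) ((1:ℝ), ((i:ℝ)+1), (0:ℝ))
            = if i = j then 1 else 0 := by
          rw [hfam]
          simpa [heisQS_eval] using heisBump_eval j i
        rw [this]
        rcases eq_or_ne j i with h | h
        · simp [h]
        · simp [h, Ne.symm h]
      rw [Finset.sum_congr rfl h2, Finset.sum_ite_eq' t i g, if_pos hi] at h1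
      exact h1
    haveI := hli.finite
    exact not_finite ℕ
end

section
/- Let 𝔤ₙ = ℂⁿ ⋊ 𝔲(n) be the unitary motion algebra with bracket [(v,X),(w,Y)] = (Xw - Yv, [X,Y]). Let ζ : 𝔤ₙ → ℝ be a normalized Lie quasi-state (ζ(v,0)=ζ(0,X)=0 for all v, X). For w ∈ ℂⁿ \ {0}, let P_w ∈ 𝔲(n) be defined by P_w(u) = i⟨u,w⟩w/⟨w,w⟩. Then ζ(-iw, i·1) = ζ(-iw, P_w). -/
open Matrix

/-- In the unitary motion algebra `𝔤ₙ = ℂⁿ ⋊ 𝔲(n)` (bracket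
`[(v,X),(w,Y)] = (Xw - Yv, [X,Y])`, `𝔲(n)` the skew-Hermitian matrices),
a normalized Lie quasi-state satisfies `ζ(-iw, i·1) = ζ(-iw, P_w)`, where
`P_w` is `i` times the orthogonal projection onto `ℂ·w`. -/
theorem normalized_quasi_state_projection_identity
    (n : ℕ) (hn : 2 ≤ n)
    (ζ : (Fin n → ℂ) × Matrix (Fin n) (Fin n) ℂ → ℝ)
    (hquasi : ∀ (a b : ℝ) (p q : (Fin n → ℂ) × Matrix (Fin n) (Fin n) ℂ),
      p.2ᴴ = -p.2 → q.2ᴴ = -q.2 →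
      p.2.mulVec q.1 - q.2.mulVec p.1 = 0 → p.2 * q.2 = q.2 * p.2 →
      ζ (a • p + b • q) = a * ζ p + b * ζ q)
    (hnormV : ∀ v : Fin n → ℂ, ζ (v, 0) = 0)
    (hnormU : ∀ X : Matrix (Fin n) (Fin n) ℂ, Xᴴ = -X → ζ (0, X) = 0)
    (w : Fin n → ℂ) (hw : w ≠ 0) :
    ζ ((-Complex.I) • w, Complex.I • (1 : Matrix (Fin n) (Fin n) ℂ)) =
    ζ ((-Complex.I) • w,
        Matrix.of fun i j => Complex.I * (w i * star (w j)) / (∑ k, w k * star (w k))) := by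
  set c : ℂ := ∑ k, w k * star (w k) with hc_def
  set P : Matrix (Fin n) (Fin n) ℂ :=
    Matrix.of fun i j => Complex.I * (w i * star (w j)) / c with hP_def
  -- c is real and nonzero
  have hc_eq : c = ((∑ k, Complex.normSq (w k) : ℝ) : ℂ) := by
    simp [hc_def, Complex.mul_conj, Complex.star_def]
  have hc_ne : c ≠ 0 := by
    rw [hc_eq]
    have hpos : 0 < ∑ k, Complex.normSq (w k) := by
      obtain ⟨k, hk⟩ : ∃ k, w k ≠ 0 := by
        by_contra h
        push_neg at h
        exact hw (funext h)
      exact Finset.sum_pos' (fun i _ => Complex.normSq_nonneg _)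
        ⟨k, Finset.mem_univ k, Complex.normSq_pos.mpr hk⟩
    exact_mod_cast hpos.ne'
  have hc_star : star c = c := by
    rw [hc_eq]; simp [Complex.star_def]
  -- P is skew-Hermitian
  have hP_skew : Pᴴ = -P := by
    ext i j
    simp only [hP_def, conjTranspose_apply, of_apply, neg_apply]
    rw [star_div₀, hc_star]
    simp [Complex.star_def, mul_comm]
    ring
  -- P w = I • w
  have hPw : P.mulVec w = Complex.I • w := by
    funext i
    simp only [mulVec, dotProduct, hP_def, of_apply, Pi.smul_apply, smul_eq_mul]
    rw [show (∑ j, Complex.I * (w i * star (w j)) / c * w j)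
        = (Complex.I * w i / c) * ∑ j, w j * star (w j) by
      rw [Finset.mul_sum]; congr 1; funext j; ring]
    rw [← hc_def]
    field_simp
  set Q : Matrix (Fin n) (Fin n) ℂ := Complex.I • (1 : Matrix (Fin n) (Fin n) ℂ) - P
    with hQ_def
  have hQ_skew : Qᴴ = -Q := by
    rw [hQ_def, conjTranspose_sub, conjTranspose_smul, hP_skew]
    simp only [Complex.star_def, Complex.conj_I, conjTranspose_one, neg_smul, neg_sub]
    abel
  have hQw : Q.mulVec (Complex.I • w) = 0 := by
    rw [hQ_def, sub_mulVec, smul_mulVec, one_mulVec, mulVec_smul, hPw]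
    funext i; simp
  have hcomm : P * Q = Q * P := by
    rw [hQ_def, mul_sub, sub_mul, mul_smul_comm, smul_mul_assoc, mul_one, one_mul]
  have key := hquasi 1 1 ((-Complex.I) • w, P) ((0 : Fin n → ℂ), Q)
    hP_skew hQ_skew (by simp [neg_smul, mulVec_neg, hQw]) hcomm
  have hsum : (1:ℝ) • (((-Complex.I) • w, P) : (Fin n → ℂ) × Matrix (Fin n) (Fin n) ℂ)
      + (1:ℝ) • (((0 : Fin n → ℂ), Q) : (Fin n → ℂ) × Matrix (Fin n) (Fin n) ℂ)
      = ((-Complex.I) • w, Complex.I • (1 : Matrix (Fin n) (Fin n) ℂ)) := by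
    simp [hQ_def, Prod.ext_iff]
  rw [hsum, hnormU Q hQ_skew] at key
  simpa [hP_def] using key
end

section
/- Let n ≥ 2 and ζ : ℂⁿ ⋊ 𝔲(n) → ℝ a normalized Lie quasi-state. Then f_ζ(w) := ζ(-iw, i·1) defines a generalized frame function on ℂⁿ: f_ζ(0) = 0 and f_ζ(u+v) = f_ζ(u) + f_ζ(v) for all nonzero orthogonal u, v ∈ ℂⁿ. -/
open Matrix

private lemma vmv_mulVec {n : ℕ} (u w x : Fin n → ℂ) :
    (Matrix.vecMulVec u w).mulVec x = (∑ k, w k * x k) • u := by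
  funext j
  simp [Matrix.mulVec, dotProduct, Matrix.vecMulVec_apply, Finset.mul_sum,
    mul_comm, mul_assoc, mul_left_comm]

private lemma vmv_mul {n : ℕ} (u w v z : Fin n → ℂ) :
    Matrix.vecMulVec u w * Matrix.vecMulVec v z = (∑ k, w k * v k) • Matrix.vecMulVec u z := by
  ext i j
  simp [Matrix.mul_apply, Matrix.vecMulVec_apply, Finset.sum_mul, Finset.mul_sum,
    mul_comm, mul_assoc, mul_left_comm]

private lemma vmv_ct {n : ℕ} (u : Fin n → ℂ) :
    (Matrix.vecMulVec u (star u))ᴴ = Matrix.vecMulVec u (star u) := by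
  ext i j
  simp [Matrix.conjTranspose_apply, Matrix.vecMulVec_apply, mul_comm]

/-- For a normalized Lie quasi-state `ζ` on `𝔤ₙ = ℂⁿ ⋊ 𝔲(n)` (`n ≥ 2`), the function
`f_ζ(w) = ζ(-iw, i·1)` is a generalized frame function on `ℂⁿ`. -/
theorem normalized_quasi_state_gives_frame_function
    (n : ℕ) (hn : 2 ≤ n)
    (ζ : (Fin n → ℂ) × Matrix (Fin n) (Fin n) ℂ → ℝ)
    (hquasi : ∀ (a b : ℝ) (p q : (Fin n → ℂ) × Matrix (Fin n) (Fin n) ℂ),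
      p.2ᴴ = -p.2 → q.2ᴴ = -q.2 →
      p.2.mulVec q.1 - q.2.mulVec p.1 = 0 → p.2 * q.2 = q.2 * p.2 →
      ζ (a • p + b • q) = a * ζ p + b * ζ q)
    (hnormV : ∀ v : Fin n → ℂ, ζ (v, 0) = 0)
    (hnormU : ∀ X : Matrix (Fin n) (Fin n) ℂ, Xᴴ = -X → ζ (0, X) = 0)
    (f : (Fin n → ℂ) → ℝ)
    (hf : ∀ w : Fin n → ℂ,
      f w = ζ ((-Complex.I) • w, Complex.I • (1 : Matrix (Fin n) (Fin n) ℂ))) :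
    f 0 = 0 ∧
    ∀ u v : Fin n → ℂ, u ≠ 0 → v ≠ 0 → (∑ j, u j * star (v j)) = 0 →
      f (u + v) = f u + f v := by
  have hskewI : (Complex.I • (1 : Matrix (Fin n) (Fin n) ℂ))ᴴ
      = -(Complex.I • (1 : Matrix (Fin n) (Fin n) ℂ)) := by
    simp [Matrix.conjTranspose_smul, Complex.star_def, Complex.conj_I]
  have hadd : ∀ p q : (Fin n → ℂ) × Matrix (Fin n) (Fin n) ℂ,
      p.2ᴴ = -p.2 → q.2ᴴ = -q.2 →
      p.2.mulVec q.1 - q.2.mulVec p.1 = 0 → p.2 * q.2 = q.2 * p.2 →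
      ζ (p + q) = ζ p + ζ q := by
    intro p q h1 h2 h3 h4
    have := hquasi 1 1 p q h1 h2 h3 h4
    simpa using this
  refine ⟨?_, ?_⟩
  · rw [hf, smul_zero]
    exact hnormU _ hskewI
  intro u v hu hv horth
  -- inner products
  have hsum_ne : ∀ w : Fin n → ℂ, w ≠ 0 → (∑ j, w j * star (w j)) ≠ 0 := by
    intro w hw
    have hcast : (∑ j, w j * star (w j)) = ((∑ j, Complex.normSq (w j) : ℝ) : ℂ) := by
      push_cast
      exact Finset.sum_congr rfl fun j _ => by
        rw [Complex.star_def, Complex.mul_conj]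
    obtain ⟨j, hj⟩ := Function.ne_iff.mp hw
    have h1 : (0:ℝ) < ∑ k, Complex.normSq (w k) := by
      have h2 : 0 < Complex.normSq (w j) := Complex.normSq_pos.mpr hj
      have := Finset.single_le_sum (f := fun k => Complex.normSq (w k))
        (fun k _ => Complex.normSq_nonneg _) (Finset.mem_univ j)
      linarith
    rw [hcast]
    exact_mod_cast h1.ne'
  set su : ℂ := ∑ j, u j * star (u j) with hsu_def
  set sv : ℂ := ∑ j, v j * star (v j) with hsv_def
  have hsu : su ≠ 0 := hsum_ne u hu
  have hsv : sv ≠ 0 := hsum_ne v hv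
  have hsu' : (∑ k, star (u k) * u k) = su := by
    rw [hsu_def]; exact Finset.sum_congr rfl fun k _ => mul_comm _ _
  have hsv' : (∑ k, star (v k) * v k) = sv := by
    rw [hsv_def]; exact Finset.sum_congr rfl fun k _ => mul_comm _ _
  have hvu : (∑ k, star (v k) * u k) = 0 := by
    rw [← horth]; exact Finset.sum_congr rfl fun k _ => mul_comm _ _
  have huv : (∑ k, star (u k) * v k) = 0 := by
    have h := congrArg star horth
    rw [star_sum] at h
    simpa [mul_comm] using h
  set Pu : Matrix (Fin n) (Fin n) ℂ :=
    (Complex.I * su⁻¹) • Matrix.vecMulVec u (star u) with hPu_def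
  set Pv : Matrix (Fin n) (Fin n) ℂ :=
    (Complex.I * sv⁻¹) • Matrix.vecMulVec v (star v) with hPv_def
  -- star of inner product
  have hsu_star : star su = su := by
    rw [hsu_def, star_sum]
    exact Finset.sum_congr rfl fun k _ => by simp [mul_comm]
  have hsv_star : star sv = sv := by
    rw [hsv_def, star_sum]
    exact Finset.sum_congr rfl fun k _ => by simp [mul_comm]
  -- skew-hermitian
  have hPuH : Puᴴ = -Pu := by
    rw [hPu_def, Matrix.conjTranspose_smul, vmv_ct]
    rw [show star (Complex.I * su⁻¹) = -(Complex.I * su⁻¹) by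
      simp [star_mul', hsu_star, Complex.star_def, Complex.conj_I]]
    rw [neg_smul]
  have hPvH : Pvᴴ = -Pv := by
    rw [hPv_def, Matrix.conjTranspose_smul, vmv_ct]
    rw [show star (Complex.I * sv⁻¹) = -(Complex.I * sv⁻¹) by
      simp [star_mul', hsv_star, Complex.star_def, Complex.conj_I]]
    rw [neg_smul]
  -- mulVec facts
  have hPu_u : Pu.mulVec u = Complex.I • u := by
    rw [hPu_def, Matrix.smul_mulVec, vmv_mulVec]
    simp only [Pi.star_apply]
    rw [hsu', smul_smul, mul_assoc, inv_mul_cancel₀ hsu, mul_one]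
  have hPv_v : Pv.mulVec v = Complex.I • v := by
    rw [hPv_def, Matrix.smul_mulVec, vmv_mulVec]
    simp only [Pi.star_apply]
    rw [hsv', smul_smul, mul_assoc, inv_mul_cancel₀ hsv, mul_one]
  have hPu_v : Pu.mulVec v = 0 := by
    rw [hPu_def, Matrix.smul_mulVec, vmv_mulVec]
    simp only [Pi.star_apply]
    rw [huv, zero_smul, smul_zero]
  have hPv_u : Pv.mulVec u = 0 := by
    rw [hPv_def, Matrix.smul_mulVec, vmv_mulVec]
    simp only [Pi.star_apply]
    rw [hvu, zero_smul, smul_zero]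
  -- products
  have hPuPv : Pu * Pv = 0 := by
    rw [hPu_def, hPv_def, Matrix.smul_mul, Matrix.mul_smul, vmv_mul]
    simp only [Pi.star_apply]
    rw [huv]; simp
  have hPvPu : Pv * Pu = 0 := by
    rw [hPu_def, hPv_def, Matrix.smul_mul, Matrix.mul_smul, vmv_mul]
    simp only [Pi.star_apply]
    rw [hvu]; simp
  -- commutation with I•1
  have hIcomm : ∀ M : Matrix (Fin n) (Fin n) ℂ,
      M * (Complex.I • 1) = (Complex.I • 1) * M := by
    intro M
    rw [Matrix.mul_smul, Matrix.smul_mul, mul_one, one_mul]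
  -- step 1: ζ((-I)•u, I•1) = ζ((-I)•u, Pu)
  have step : ∀ (w : Fin n → ℂ) (P : Matrix (Fin n) (Fin n) ℂ),
      Pᴴ = -P → P.mulVec w = Complex.I • w →
      ζ ((-Complex.I) • w, Complex.I • 1) = ζ ((-Complex.I) • w, P) := by
    intro w P hPH hPw
    have hCH : (Complex.I • 1 - P)ᴴ = -(Complex.I • 1 - P) := by
      rw [Matrix.conjTranspose_sub, hskewI, hPH]; abel
    have hbr : P.mulVec (0 : Fin n → ℂ)
        - (Complex.I • 1 - P).mulVec ((-Complex.I) • w) = 0 := by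
      simp [Matrix.mulVec_smul, Matrix.sub_mulVec, Matrix.smul_mulVec, Matrix.mulVec_neg, hPw]
    have hcm : P * (Complex.I • 1 - P) = (Complex.I • 1 - P) * P := by
      rw [mul_sub, sub_mul, hIcomm]
    have h := hadd ((-Complex.I) • w, P) (0, Complex.I • 1 - P) hPH hCH hbr hcm
    simp only [Prod.mk_add_mk, add_zero] at h
    rw [show P + (Complex.I • (1:Matrix (Fin n) (Fin n) ℂ) - P) = Complex.I • 1 by abel] at h
    rw [h, hnormU _ hCH, add_zero]
  have e1 := step u Pu hPuH hPu_u
  have e2 := step v Pv hPvH hPv_v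
  -- combined element
  have hPPH : (Pu + Pv)ᴴ = -(Pu + Pv) := by
    rw [Matrix.conjTranspose_add, hPuH, hPvH]; abel
  have hCH : (Complex.I • 1 - Pu - Pv)ᴴ = -(Complex.I • 1 - Pu - Pv) := by
    rw [Matrix.conjTranspose_sub, Matrix.conjTranspose_sub, hskewI, hPuH, hPvH]; abel
  -- ζ((-I)•(u+v), I•1) = ζ((-I)•u + (-I)•v, Pu+Pv) + 0
  have hbr3 : (Pu + Pv).mulVec (0 : Fin n → ℂ)
      - (Complex.I • 1 - Pu - Pv).mulVec ((-Complex.I) • u + (-Complex.I) • v) = 0 := by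
    simp [Matrix.mulVec_add, Matrix.mulVec_smul, Matrix.sub_mulVec,
      Matrix.smul_mulVec, Matrix.mulVec_neg, hPu_u, hPv_v, hPu_v, hPv_u]
  have hcm3 : (Pu + Pv) * (Complex.I • 1 - Pu - Pv)
      = (Complex.I • 1 - Pu - Pv) * (Pu + Pv) := by
    simp only [mul_sub, sub_mul, mul_add, add_mul, hPuPv, hPvPu, hIcomm Pu, hIcomm Pv]
    abel
  have h3 := hadd ((-Complex.I) • u + (-Complex.I) • v, Pu + Pv)
    (0, Complex.I • 1 - Pu - Pv) hPPH hCH hbr3 hcm3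
  simp only [Prod.mk_add_mk, add_zero] at h3
  rw [show Pu + Pv + (Complex.I • (1:Matrix (Fin n) (Fin n) ℂ) - Pu - Pv)
      = Complex.I • 1 by abel] at h3
  -- ζ((-I)•u + (-I)•v, Pu+Pv) = ζ A + ζ B
  have hbrAB : Pu.mulVec ((-Complex.I) • v) - Pv.mulVec ((-Complex.I) • u) = 0 := by
    rw [Matrix.mulVec_smul, Matrix.mulVec_smul, hPu_v, hPv_u]
    simp
  have h4 := hadd ((-Complex.I) • u, Pu) ((-Complex.I) • v, Pv) hPuH hPvH hbrAB (hPuPv.trans hPvPu.symm)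
  simp only [Prod.mk_add_mk] at h4
  have hsm : (-Complex.I) • (u + v) = (-Complex.I) • u + (-Complex.I) • v := smul_add _ _ _
  rw [hf (u + v), hf u, hf v, e1, e2, hsm, h3, h4, hnormU _ hCH, add_zero]
end
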